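/- Let n > p, X ∈ R^{n×p} and Y ∈ R^{n×(n−p)}. Then ‖X‖_* ≤ ‖[X Y]‖_*, where [X Y] ∈ R^{n×n} is the block matrix with blocks X and Y, and equality holds if and only if Y = 0. -/

import Mathlib

open Matrix

noncomputable def nuclearNorm {m n : Type*} [Fintype m] [Fintype n] [DecidableEq n]
    (A : Matrix m n ℝ) : ℝ :=
  (let hA := (Matrix.posSemidef_conjTranspose_mul_self A).1
   (hA.eigenvectorUnitary.1 * diagonal (Real.sqrt ∘ hA.eigenvalues) *
     (star hA.eigenvectorUnitary : Matrix n n ℝ))).trace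

noncomputable def opNorm {m n : Type*} [Fintype m] [Fintype n] [DecidableEq m] [DecidableEq n]
    (A : Matrix m n ℝ) : ℝ :=
  ‖(LinearMap.toContinuousLinearMap
      (Matrix.toEuclideanLin A : EuclideanSpace ℝ n →ₗ[ℝ] EuclideanSpace ℝ m))‖

def finner {m n : Type*} [Fintype m] [Fintype n] (A B : Matrix m n ℝ) : ℝ :=
  (Aᵀ * B).trace

noncomputable def nuclearSubdiff {m n : Type*} [Fintype m] [Fintype n] [DecidableEq n]
    (X : Matrix m n ℝ) : Set (Matrix m n ℝ) :=
  {Y | ∀ Z, nuclearNorm X + finner Y (Z - X) ≤ nuclearNorm Z}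

def rectDiag (n p : ℕ) (s : Fin p → ℝ) : Matrix (Fin n) (Fin p) ℝ :=
  Matrix.of fun i j => if (i : ℕ) = (j : ℕ) then s j else 0

def blockIR (n p r : ℕ) (R : Matrix (Fin (n - r)) (Fin (p - r)) ℝ) :
    Matrix (Fin n) (Fin p) ℝ :=
  Matrix.of fun i j =>
    if h : (i : ℕ) < r ∨ (j : ℕ) < r then (if (i : ℕ) = (j : ℕ) then 1 else 0)
    else R ⟨i - r, by have := i.isLt; omega⟩ ⟨j - r, by have := j.isLt; omega⟩

/-
For `B = [X Y]` we have `B Bᵀ = X Xᵀ + Y Yᵀ`, and `‖A‖_* = tr √(A Aᵀ)` because `AᵀA` and `AAᵀ`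
have the same nonzero eigenvalues with multiplicities (`charpoly_mul_comm'`). The square root is
operator monotone on real positive semidefinite matrices, so
`√(X Xᵀ + Y Yᵀ) - √(X Xᵀ)` is positive semidefinite; its trace is `‖B‖_* - ‖X‖_* ≥ 0`, and it
vanishes only if the difference is zero, i.e. `Y Yᵀ = 0`.
-/

namespace Polynomial

theorem sum_map_sqrt_roots_X_pow_mul {p : ℝ[X]} (hp : p ≠ 0) (r : ℕ) :
    (((X ^ r * p).roots).map Real.sqrt).sum = (p.roots.map Real.sqrt).sum := by
  rw [roots_mul (mul_ne_zero (pow_ne_zero r X_ne_zero) hp), roots_X_pow]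
  simp [Multiset.map_nsmul, Multiset.sum_nsmul]

end Polynomial

open scoped MatrixOrder

namespace Matrix

variable {m n k : Type*} [Fintype m] [Fintype n] [Fintype k]

theorem dotProduct_mulVec_mul_add_mul_of_mulVec_eq_smul {S T D : Matrix k k ℝ} (hD : Dᵀ = D)
    {v : k → ℝ} {c : ℝ} (hv : D *ᵥ v = c • v) :
    v ⬝ᵥ ((S * D + D * T) *ᵥ v) = c * (v ⬝ᵥ (S *ᵥ v) + v ⬝ᵥ (T *ᵥ v)) := by
  have hDT : v ⬝ᵥ ((D * T) *ᵥ v) = c * v ⬝ᵥ (T *ᵥ v) := by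
    rw [← mulVec_mulVec, dotProduct_mulVec, ← mulVec_transpose, hD, hv, smul_dotProduct,
      smul_eq_mul]
  rw [add_mulVec, dotProduct_add, hDT, ← mulVec_mulVec, hv, mulVec_smul, dotProduct_smul,
    smul_eq_mul]
  ring

variable [DecidableEq k]

theorem sqrt_le_sqrt {P Q : Matrix k k ℝ} (hP : 0 ≤ P) (hPQ : P ≤ Q) :
    CFC.sqrt P ≤ CFC.sqrt Q := by
  set S := CFC.sqrt Q
  set T := CFC.sqrt P
  have hS : S.PosSemidef := (CFC.sqrt_nonneg Q).posSemidef
  have hT : T.PosSemidef := (CFC.sqrt_nonneg P).posSemidef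
  have hD : (S - T).IsHermitian := hS.1.sub hT.1
  refine hD.posSemidef_iff_eigenvalues_nonneg.mpr fun i ↦ show 0 ≤ hD.eigenvalues i from ?_
  by_contra! hneg
  set v : k → ℝ := ⇑(hD.eigenvectorBasis i)
  have hv : (S - T) *ᵥ v = hD.eigenvalues i • v := hD.mulVec_eigenvectorBasis i
  have hSv := hS.dotProduct_mulVec_nonneg v
  have hTv := hT.dotProduct_mulVec_nonneg v
  simp only [star_trivial] at hSv hTv
  -- `0 ≤ v ⬝ (Q - P) v = λ (v ⬝ S v + v ⬝ T v) ≤ 0` forces `S v = T v = 0`, hence `λ v = 0`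
  have hQP : 0 ≤ v ⬝ᵥ ((S * (S - T) + (S - T) * T) *ᵥ v) := by
    have h := (le_iff.mp hPQ).dotProduct_mulVec_nonneg v
    rwa [star_trivial, ← CFC.sqrt_mul_sqrt_self Q (hP.trans hPQ), ← CFC.sqrt_mul_sqrt_self P hP,
      show S * S - T * T = S * (S - T) + (S - T) * T by noncomm_ring] at h
  rw [dotProduct_mulVec_mul_add_mul_of_mulVec_eq_smul (by simpa using hD.eq) hv] at hQP
  have hSv0 : S *ᵥ v = 0 := (hS.dotProduct_mulVec_zero_iff v).mp (by rw [star_trivial]; nlinarith)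
  have hTv0 : T *ᵥ v = 0 := (hT.dotProduct_mulVec_zero_iff v).mp (by rw [star_trivial]; nlinarith)
  have hv0 : v ≠ 0 := by
    simpa [v] using hD.eigenvectorBasis.orthonormal.ne_zero i
  rw [sub_mulVec, hSv0, hTv0, sub_zero, eq_comm, smul_eq_zero] at hv
  exact hv.elim hneg.ne hv0

theorem trace_sqrt_le_trace_sqrt {P Q : Matrix k k ℝ} (hP : 0 ≤ P) (hPQ : P ≤ Q) :
    (CFC.sqrt P).trace ≤ (CFC.sqrt Q).trace := by
  simpa [trace_sub] using (le_iff.mp (sqrt_le_sqrt hP hPQ)).trace_nonneg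

theorem eq_of_trace_sqrt_eq {P Q : Matrix k k ℝ} (hP : 0 ≤ P) (hPQ : P ≤ Q)
    (h : (CFC.sqrt P).trace = (CFC.sqrt Q).trace) : P = Q := by
  have hsqrt : CFC.sqrt Q - CFC.sqrt P = 0 :=
    (le_iff.mp (sqrt_le_sqrt hP hPQ)).trace_eq_zero_iff.mp (by rw [trace_sub, h, sub_self])
  rw [← CFC.sqrt_mul_sqrt_self P hP, ← CFC.sqrt_mul_sqrt_self Q (hP.trans hPQ),
    sub_eq_zero.mp hsqrt]

theorem trace_sqrt_eq_sum_map_sqrt_roots_charpoly {P : Matrix k k ℝ} (hP : P.PosSemidef) :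
    (CFC.sqrt P).trace = (P.charpoly.roots.map Real.sqrt).sum := by
  rw [CFC.sqrt_eq_real_sqrt _ hP.nonneg, cfcₙ_eq_cfc, hP.1.cfc_eq, IsHermitian.cfc,
    Unitary.conjStarAlgAut_apply, trace_mul_cycle, Unitary.coe_star_mul_self, one_mul,
    trace_diagonal, hP.1.roots_charpoly_eq_eigenvalues]
  simp

variable [DecidableEq n]

theorem nuclearNorm_eq_trace_sqrt_conjTranspose_mul_self (A : Matrix m n ℝ) :
    nuclearNorm A = (CFC.sqrt (Aᴴ * A)).trace := by
  rw [CFC.sqrt_eq_real_sqrt _ (posSemidef_conjTranspose_mul_self A).nonneg, cfcₙ_eq_cfc,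
    (posSemidef_conjTranspose_mul_self A).1.cfc_eq]
  rfl

variable [DecidableEq m]

theorem trace_sqrt_conjTranspose_mul_self (A : Matrix m n ℝ) :
    (CFC.sqrt (Aᴴ * A)).trace = (CFC.sqrt (A * Aᴴ)).trace := by
  rw [trace_sqrt_eq_sum_map_sqrt_roots_charpoly (posSemidef_conjTranspose_mul_self A),
    trace_sqrt_eq_sum_map_sqrt_roots_charpoly (posSemidef_self_mul_conjTranspose A),
    ← Polynomial.sum_map_sqrt_roots_X_pow_mul (charpoly_monic _).ne_zero (Fintype.card m),
    ← Polynomial.sum_map_sqrt_roots_X_pow_mul (charpoly_monic _).ne_zero (Fintype.card n),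
    charpoly_mul_comm']

theorem nuclearNorm_eq_trace_sqrt_self_mul_conjTranspose (A : Matrix m n ℝ) :
    nuclearNorm A = (CFC.sqrt (A * Aᴴ)).trace := by
  rw [nuclearNorm_eq_trace_sqrt_conjTranspose_mul_self, trace_sqrt_conjTranspose_mul_self]

end Matrix

theorem nuclearNorm_le_nuclearNorm_fromColumns_general {n p : ℕ}
    (X : Matrix (Fin n) (Fin p) ℝ) (Y : Matrix (Fin n) (Fin (n - p)) ℝ) :
    nuclearNorm X ≤ nuclearNorm (Matrix.fromCols X Y) ∧
    (nuclearNorm X = nuclearNorm (Matrix.fromCols X Y) ↔ Y = 0) := by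
  have hXY : fromCols X Y * (fromCols X Y)ᴴ = X * Xᴴ + Y * Yᴴ := by
    rw [conjTranspose_fromCols_eq_fromRows_conjTranspose, fromCols_mul_fromRows]
  have hX : 0 ≤ X * Xᴴ := (posSemidef_self_mul_conjTranspose X).nonneg
  have hle : X * Xᴴ ≤ X * Xᴴ + Y * Yᴴ :=
    le_add_of_nonneg_right (posSemidef_self_mul_conjTranspose Y).nonneg
  simp only [nuclearNorm_eq_trace_sqrt_self_mul_conjTranspose, hXY]
  refine ⟨trace_sqrt_le_trace_sqrt hX hle, fun h ↦ ?_, ?_⟩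
  · exact self_mul_conjTranspose_eq_zero.mp (left_eq_add.mp (eq_of_trace_sqrt_eq hX hle h))
  · rintro rfl
    simp

theorem nuclearNorm_le_nuclearNorm_fromColumns {n p : ℕ} (hpn : p < n)
    (X : Matrix (Fin n) (Fin p) ℝ) (Y : Matrix (Fin n) (Fin (n - p)) ℝ) :
    nuclearNorm X ≤ nuclearNorm (Matrix.fromCols X Y) ∧
    (nuclearNorm X = nuclearNorm (Matrix.fromCols X Y) ↔ Y = 0) :=
  nuclearNorm_le_nuclearNorm_fromColumns_general X Y
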